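/- arXiv:2512.05158 — 4 statements merged into one kernel-verified Lean document; each statement's English description precedes it below -/
import Mathlib

section
/- Let κ > 0, c_f, c_A, c_x ≥ 0, and let y : ℝ → EuclideanSpace ℝ (Fin d) be differentiable, F : ℝ → EuclideanSpace ℝ (Fin d) (the forcing), and a, b : ℝ → ℝ (input magnitudes ‖A(t)‖ and ‖x(t)‖). Suppose that for all t: y'(t) = −y(t) + F(t) + (−κ(‖y(t)‖² − 1)) • y(t), ‖y(t)‖ ≥ 1, and |(‖y(t)‖² − 1) · ⟪y(t), F(t)⟫| ≤ c_f(‖y(t)‖² − 1)² + c_A·a(t)² + c_x·b(t)². Then the derivative of t ↦ V(y(t)), where V(z) = (1/4)(‖z‖² − 1)², satisfies d/dt V(y(t)) ≤ −(1 + κ − c_f)(‖y(t)‖² − 1)² + c_A·a(t)² + c_x·b(t)² for all t. -/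
open scoped RealInnerProductSpace

/-! Along the flow, `d/dt V(y) = (‖y‖² - 1) ⟪y, ẏ⟫`, and the radial part of the vector field is
`⟪y, ẏ⟫ = -(1 + κ(‖y‖² - 1)) ‖y‖² + ⟪y, F⟫`. Outside the unit ball (`s = ‖y‖² - 1 ≥ 0`) the first
term contributes at most `-(1 + κ) s²`, and the Young-type bound absorbs the forcing term. -/

section

variable {E : Type*} [NormedAddCommGroup E] [InnerProductSpace ℝ E]

theorem HasDerivAt.quarter_norm_sq_sub_one_sq {y : ℝ → E} {y' : E} {t : ℝ}
    (hy : HasDerivAt y y' t) :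
    HasDerivAt (fun t => (1 / 4) * (‖y t‖ ^ 2 - 1) ^ 2) ((‖y t‖ ^ 2 - 1) * ⟪y t, y'⟫) t :=
  (((hy.norm_sq.sub_const 1).pow 2).const_mul (1 / 4 : ℝ)).congr_deriv (by ring)

theorem inner_homeostatic_flow (κ : ℝ) (y F : E) :
    ⟪y, -y + F + (-(κ * (‖y‖ ^ 2 - 1))) • y⟫ =
      -((1 + κ * (‖y‖ ^ 2 - 1)) * ‖y‖ ^ 2) + ⟪y, F⟫ := by
  rw [inner_add_right, inner_add_right, inner_neg_right, real_inner_smul_right,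
    real_inner_self_eq_norm_sq]
  ring

end

theorem radial_dissipation_le {κ s p : ℝ} (hκ : 0 ≤ κ) (hs : 0 ≤ s) :
    s * (-((1 + κ * s) * (s + 1)) + p) ≤ -((1 + κ) * s ^ 2) + s * p := by
  nlinarith [mul_nonneg hκ (pow_nonneg hs 3)]

theorem stmt_5_general (d : ℕ) (κ cf cA cx : ℝ) (hκ : 0 < κ)
    (y : ℝ → EuclideanSpace ℝ (Fin d)) (hy : Differentiable ℝ y)
    (F : ℝ → EuclideanSpace ℝ (Fin d)) (a b : ℝ → ℝ)
    (hode : ∀ t, deriv y t =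
      -y t + F t + (-(κ * (‖y t‖ ^ 2 - 1))) • y t)
    (hnorm : ∀ t, 1 ≤ ‖y t‖)
    (hbound : ∀ t, |(‖y t‖ ^ 2 - 1) * ⟪y t, F t⟫| ≤
      cf * (‖y t‖ ^ 2 - 1) ^ 2 + cA * (a t) ^ 2 + cx * (b t) ^ 2)
    (V : EuclideanSpace ℝ (Fin d) → ℝ)
    (hV : ∀ z, V z = (1 / 4) * (‖z‖ ^ 2 - 1) ^ 2) :
    ∀ t, deriv (fun t => V (y t)) t ≤
      -((1 + κ - cf) * (‖y t‖ ^ 2 - 1) ^ 2) + cA * (a t) ^ 2 + cx * (b t) ^ 2 := by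
  intro t
  have hVy : (fun t => V (y t)) = fun t => (1 / 4) * (‖y t‖ ^ 2 - 1) ^ 2 :=
    funext fun t => hV (y t)
  have hs : 0 ≤ ‖y t‖ ^ 2 - 1 := by nlinarith [hnorm t]
  rw [hVy, (hy t).hasDerivAt.quarter_norm_sq_sub_one_sq.deriv, hode t, inner_homeostatic_flow]
  have hforce := (le_abs_self _).trans (hbound t)
  linarith [radial_dissipation_le (p := ⟪y t, F t⟫) hκ.le hs]

theorem stmt_5 (d : ℕ) (κ cf cA cx : ℝ) (hκ : 0 < κ)
    (hcf : 0 ≤ cf) (hcA : 0 ≤ cA) (hcx : 0 ≤ cx)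
    (y : ℝ → EuclideanSpace ℝ (Fin d)) (hy : Differentiable ℝ y)
    (F : ℝ → EuclideanSpace ℝ (Fin d)) (a b : ℝ → ℝ)
    (hode : ∀ t, deriv y t =
      -y t + F t + (-(κ * (‖y t‖ ^ 2 - 1))) • y t)
    (hnorm : ∀ t, 1 ≤ ‖y t‖)
    (hbound : ∀ t, |(‖y t‖ ^ 2 - 1) * ⟪y t, F t⟫| ≤
      cf * (‖y t‖ ^ 2 - 1) ^ 2 + cA * (a t) ^ 2 + cx * (b t) ^ 2)
    (V : EuclideanSpace ℝ (Fin d) → ℝ)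
    (hV : ∀ z, V z = (1 / 4) * (‖z‖ ^ 2 - 1) ^ 2) :
    ∀ t, deriv (fun t => V (y t)) t ≤
      -((1 + κ - cf) * (‖y t‖ ^ 2 - 1) ^ 2) + cA * (a t) ^ 2 + cx * (b t) ^ 2 :=
  stmt_5_general d κ cf cA cx hκ y hy F a b hode hnorm hbound V hV
end

section
/- Let κ > 0, γ ∈ ℝ, let W : EuclideanSpace ℝ (Fin d) →L[ℝ] EuclideanSpace ℝ (Fin d) be skew-adjoint, and let y : ℝ → EuclideanSpace ℝ (Fin d) be differentiable with y'(t) = −y(t) + γ • W (y(t)) + (−κ(‖y(t)‖² − 1)) • y(t) for all t. Then the squared radius u(t) = ‖y(t)‖² satisfies u'(t) = −2·u(t)·(1 + κ(u(t) − 1)) for all t; in particular the radial dynamics are independent of W and γ. -/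
open scoped RealInnerProductSpace

theorem stmt_11 (d : ℕ) (κ γ : ℝ) (hκ : 0 < κ)
    (W : EuclideanSpace ℝ (Fin d) →L[ℝ] EuclideanSpace ℝ (Fin d))
    (hW : ∀ z z', ⟪W z, z'⟫ = -⟪z, W z'⟫)
    (y : ℝ → EuclideanSpace ℝ (Fin d)) (hy : Differentiable ℝ y)
    (hode : ∀ t, deriv y t =
      -y t + γ • W (y t) + (-(κ * (‖y t‖ ^ 2 - 1))) • y t) :
    ∀ t, deriv (fun t => ‖y t‖ ^ 2) t =
      -2 * ‖y t‖ ^ 2 * (1 + κ * (‖y t‖ ^ 2 - 1)) := by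
  intro t
  have hy' : HasDerivAt y (deriv y t) t := (hy t).hasDerivAt
  have h1 : HasDerivAt (fun t => ⟪y t, y t⟫)
      (⟪y t, deriv y t⟫ + ⟪deriv y t, y t⟫) t := hy'.inner ℝ hy'
  have h2 : HasDerivAt (fun t => ‖y t‖ ^ 2)
      (⟪y t, deriv y t⟫ + ⟪deriv y t, y t⟫) t := by
    simpa only [real_inner_self_eq_norm_sq] using h1
  rw [h2.deriv]
  have hWy : ⟪y t, W (y t)⟫ = 0 := by
    have h := hW (y t) (y t)
    have h2 := real_inner_comm (y t) (W (y t))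
    linarith
  have hWy' : ⟪W (y t), y t⟫ = 0 := by
    rw [real_inner_comm]; exact hWy
  rw [hode t]
  simp only [inner_add_left, inner_add_right, inner_neg_left, inner_neg_right,
    inner_smul_left, inner_smul_right, real_inner_self_eq_norm_sq,
    RCLike.inner_apply, conj_trivial, hWy, hWy']
  ring
end

section
/- Let κ > 1, γ ∈ ℝ, let W : EuclideanSpace ℝ (Fin d) →L[ℝ] EuclideanSpace ℝ (Fin d) be skew-adjoint, and let y : ℝ → EuclideanSpace ℝ (Fin d) be differentiable with y'(t) = −y(t) + γ • W (y(t)) + (−κ(‖y(t)‖² − 1)) • y(t) for all t ≥ 0. If ‖y(0)‖² = (κ − 1)/κ, then ‖y(t)‖² = (κ − 1)/κ for all t ≥ 0; that is, the sphere of squared radius (κ − 1)/κ is invariant, forming a ring-like attracting manifold. -/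
open scoped RealInnerProductSpace

/-- Integrating factor: `v t * exp (-∫ₐᵗ g)` has zero derivative. -/
theorem eq_mul_exp_integral_of_hasDerivAt_mul {g v : ℝ → ℝ} {a : ℝ} (hg : Continuous g)
    (hv : ∀ t ≥ a, HasDerivAt v (g t * v t) t) :
    ∀ t ≥ a, v t = v a * Real.exp (∫ s in a..t, g s) := by
  set G : ℝ → ℝ := fun t => ∫ s in a..t, g s
  have hG : ∀ t, HasDerivAt G (g t) t := fun t => hg.integral_hasStrictDerivAt a t |>.hasDerivAt
  have hF : ∀ t ≥ a, HasDerivAt (fun t => v t * Real.exp (-G t)) 0 t := fun t ht =>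
    ((hv t ht).mul (hG t).neg.exp).congr_deriv (by ring)
  intro t ht
  have hconst := constant_of_has_deriv_right_zero (a := a) (b := t)
    (fun x hx => (hF x hx.1).continuousAt.continuousWithinAt)
    (fun x hx => (hF x hx.1).hasDerivWithinAt) t ⟨ht, le_rfl⟩
  simp only [G, intervalIntegral.integral_same, neg_zero, Real.exp_zero, mul_one] at hconst
  rw [← hconst, mul_assoc, ← Real.exp_add, neg_add_cancel, Real.exp_zero, mul_one]

theorem eq_zero_of_hasDerivAt_mul {g v : ℝ → ℝ} {a : ℝ} (hg : Continuous g)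
    (hv : ∀ t ≥ a, HasDerivAt v (g t * v t) t) (ha : v a = 0) : ∀ t ≥ a, v t = 0 := by
  intro t ht
  rw [eq_mul_exp_integral_of_hasDerivAt_mul hg hv t ht, ha, zero_mul]

theorem inner_self_apply_eq_zero_of_skew {E : Type*} [NormedAddCommGroup E]
    [InnerProductSpace ℝ E] {W : E → E} (hW : ∀ z z', ⟪W z, z'⟫ = -⟪z, W z'⟫) (z : E) :
    ⟪z, W z⟫ = 0 := by
  have h := hW z z
  rw [real_inner_comm] at h
  linarith

/-- Reentry is tangential, so only leak and homeostasis change `‖y‖²`. -/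
theorem inner_fhrn_field_self {E : Type*} [NormedAddCommGroup E] [InnerProductSpace ℝ E]
    {κ γ : ℝ} {W : E → E} (hW : ∀ z z', ⟪W z, z'⟫ = -⟪z, W z'⟫) (z : E) :
    ⟪z, -z + γ • W z + (-(κ * (‖z‖ ^ 2 - 1))) • z⟫ = -‖z‖ ^ 2 * (1 + κ * (‖z‖ ^ 2 - 1)) := by
  rw [inner_add_right, inner_add_right, inner_smul_right, inner_smul_right, inner_neg_right,
    inner_self_apply_eq_zero_of_skew hW, real_inner_self_eq_norm_sq]
  ring

theorem stmt_12 (d : ℕ) (κ γ : ℝ) (hκ : 1 < κ)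
    (W : EuclideanSpace ℝ (Fin d) →L[ℝ] EuclideanSpace ℝ (Fin d))
    (hW : ∀ z z', ⟪W z, z'⟫ = -⟪z, W z'⟫)
    (y : ℝ → EuclideanSpace ℝ (Fin d)) (hy : Differentiable ℝ y)
    (hode : ∀ t ≥ (0:ℝ), deriv y t =
      -y t + γ • W (y t) + (-(κ * (‖y t‖ ^ 2 - 1))) • y t)
    (hinit : ‖y 0‖ ^ 2 = (κ - 1) / κ) :
    ∀ t ≥ (0:ℝ), ‖y t‖ ^ 2 = (κ - 1) / κ := by
  have hκ0 : κ ≠ 0 := by positivity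
  -- `u' = -2u(1 + κ(u - 1)) = -2κu · (u - (κ - 1)/κ)` is linear in the deviation from the sphere.
  have hdev : ∀ t ≥ (0:ℝ), HasDerivAt (fun t => ‖y t‖ ^ 2 - (κ - 1) / κ)
      (-2 * κ * ‖y t‖ ^ 2 * (‖y t‖ ^ 2 - (κ - 1) / κ)) t := fun t ht =>
    ((hy t).hasDerivAt.norm_sq.sub_const _).congr_deriv (by
      rw [hode t ht, inner_fhrn_field_self hW]
      field_simp
      ring)
  have hcoef : Continuous fun t => -2 * κ * ‖y t‖ ^ 2 := by
    have := hy.continuous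
    fun_prop
  intro t ht
  exact sub_eq_zero.mp (eq_zero_of_hasDerivAt_mul hcoef hdev (sub_eq_zero.mpr hinit) t ht)
end

section
/- Let θ > 0 and let y : ℝ → ℝ be differentiable on [0, ∞) with y'(t) = y(t)·(θ² − y(t)²) for all t ≥ 0 and y(0) > 0. Then y(t) tends to θ as t → ∞. -/
/-!
The equation is linear in `y` with coefficient `θ² - y²`, so `y(t) = y(0) exp ∫₀ᵗ (θ² - y²)` stays
positive. For positive `y`, the Bernoulli substitution `w = y⁻² - θ⁻²` turns it into `w' = -2θ² w`,
hence `y(t)⁻² = θ⁻² + (y(0)⁻² - θ⁻²) e^{-2θ² t} → θ⁻²`.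
-/

open Set Filter Topology Real

theorem eq_mul_exp_integral_of_hasDerivAt {a y : ℝ → ℝ} {t₀ t : ℝ}
    (ha : ContinuousOn a (Ici t₀))
    (hy : ∀ s ≥ t₀, HasDerivAt y (a s * y s) s) (ht : t₀ ≤ t) :
    y t = y t₀ * exp (∫ s in t₀..t, a s) := by
  -- Extend `a` continuously to the whole line so that its primitive is differentiable at `t₀`.
  set b : ℝ → ℝ := a ∘ (max t₀ ·)
  have hb : Continuous b :=
    ha.comp_continuous (continuous_const.max continuous_id) fun _ => mem_Ici.mpr (le_max_left _ _)
  have hba : ∀ s ≥ t₀, b s = a s := fun s hs => by simp [b, max_eq_right hs]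
  have hF : ∀ s ≥ t₀, HasDerivAt (fun s => y s * exp (-∫ r in t₀..s, b r)) 0 s := fun s hs =>
    ((hy s hs).mul (hb.integral_hasStrictDerivAt t₀ s).hasDerivAt.neg.exp).congr_deriv
      (by rw [hba s hs]; ring)
  have hconst := constant_of_has_deriv_right_zero
    (fun s hs => (hF s hs.1).continuousAt.continuousWithinAt)
    (fun s hs => (hF s hs.1).hasDerivWithinAt) t ⟨ht, le_rfl⟩
  have hint : ∫ s in t₀..t, b s = ∫ s in t₀..t, a s :=
    intervalIntegral.integral_congr fun s hs => hba s (by rw [uIcc_of_le ht] at hs; exact hs.1)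
  simp only [intervalIntegral.integral_same, neg_zero, exp_zero, mul_one, hint] at hconst
  rw [← hconst, mul_assoc, ← exp_add, neg_add_cancel, exp_zero, mul_one]

theorem hasDerivAt_inv_sq_sub_inv_sq {y : ℝ → ℝ} {θ t : ℝ} (hθ : θ ≠ 0)
    (hyt : y t ≠ 0) (hy : HasDerivAt y (y t * (θ ^ 2 - y t ^ 2)) t) :
    HasDerivAt (fun s => (y s ^ 2)⁻¹ - (θ ^ 2)⁻¹)
      (-(2 * θ ^ 2) * ((y t ^ 2)⁻¹ - (θ ^ 2)⁻¹)) t := by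
  refine ((hy.pow 2).inv (pow_ne_zero 2 hyt) |>.sub_const _).congr_deriv ?_
  simp only [Pi.pow_apply]
  field_simp
  ring

theorem stmt_14 (θ : ℝ) (hθ : 0 < θ) (y : ℝ → ℝ)
    (hy : ∀ t ≥ (0:ℝ), HasDerivAt y (y t * (θ ^ 2 - (y t) ^ 2)) t)
    (h0 : 0 < y 0) :
    Filter.Tendsto y Filter.atTop (nhds θ) := by
  have hpos : ∀ t ≥ (0:ℝ), 0 < y t := by
    intro t ht
    have ha : ContinuousOn (fun s => θ ^ 2 - y s ^ 2) (Ici 0) := fun s hs =>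
      (continuousAt_const.sub ((hy s hs).continuousAt.pow 2)).continuousWithinAt
    rw [eq_mul_exp_integral_of_hasDerivAt ha
      (fun s hs => (hy s hs).congr_deriv (mul_comm _ _)) ht]
    positivity
  have hsol : ∀ t ≥ (0:ℝ),
      (y t ^ 2)⁻¹ - (θ ^ 2)⁻¹ = ((y 0 ^ 2)⁻¹ - (θ ^ 2)⁻¹) * exp (t * -(2 * θ ^ 2)) := by
    intro t ht
    have h := eq_mul_exp_integral_of_hasDerivAt continuousOn_const
      (fun s hs => hasDerivAt_inv_sq_sub_inv_sq hθ.ne' (hpos s hs).ne' (hy s hs)) ht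
    rwa [intervalIntegral.integral_const, sub_zero, smul_eq_mul] at h
  have hdecay : Tendsto (fun t => (y t ^ 2)⁻¹ - (θ ^ 2)⁻¹) atTop (𝓝 0) := by
    have hexp : Tendsto (fun t : ℝ => exp (t * -(2 * θ ^ 2))) atTop (𝓝 0) :=
      tendsto_exp_atBot.comp (tendsto_id.atTop_mul_const_of_neg (neg_neg_of_pos (by positivity)))
    have hlim := hexp.const_mul ((y 0 ^ 2)⁻¹ - (θ ^ 2)⁻¹)
    rw [mul_zero] at hlim
    refine hlim.congr' ?_
    filter_upwards [eventually_ge_atTop 0] with t ht using (hsol t ht).symm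
  have hsq : Tendsto (fun t => y t ^ 2) atTop (𝓝 (θ ^ 2)) := by
    simpa using ((tendsto_sub_nhds_zero_iff.mp hdecay).inv₀ (by positivity))
  have hsqrt : Tendsto (fun t => √(y t ^ 2)) atTop (𝓝 θ) := by
    simpa [sqrt_sq hθ.le] using hsq.sqrt
  refine hsqrt.congr' ?_
  filter_upwards [eventually_ge_atTop 0] with t ht using sqrt_sq (hpos t ht).le
end
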